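/- A map μ : S_∞ → [0,∞] with μ(∅) = 0 is σ-additive on the semiring S_∞ if and only if for all u ∈ A*, μ(Cone_∞(u)) = μ({u}) + Σ_{a∈A} μ(Cone_∞(ua)). -/

import Mathlib

open MeasureTheory ENNReal

/-- `A^∞ = A* ∪ A^ω`. -/
abbrev WordsInf (A : Type*) := List A ⊕ (ℕ → A)

/-- `u` is a prefix of the (finite or infinite) word `w`. -/
def IsPrefixInf {A : Type*} (u : List A) (w : WordsInf A) : Prop :=
  match w with
  | Sum.inl v => u <+: v
  | Sum.inr v => ∀ i : Fin u.length, v i = u.get i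

/-- The ∞-cone of a finite word `u`. -/
def ConeInf {A : Type*} (u : List A) : Set (WordsInf A) :=
  {w | IsPrefixInf u w}

/-- `S_∞`: the empty set, singletons of finite words, and ∞-cones. -/
def SInf (A : Type*) : Set (Set (WordsInf A)) :=
  {∅} ∪ {s | ∃ u : List A, s = {Sum.inl u}} ∪ {s | ∃ u : List A, s = ConeInf u}

/-- σ-additivity of a set function on a collection `C`. -/
def SigmaAdditiveOn {W : Type*} (C : Set (Set W)) (μ : Set W → ℝ≥0∞) : Prop :=
  ∀ S : ℕ → Set W, (∀ n, S n ∈ C) → (Pairwise fun m n => Disjoint (S m) (S n)) →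
    (⋃ n, S n) ∈ C → μ (⋃ n, S n) = ∑' n, μ (S n)

/-! The identity is σ-additivity for the partition `Cone u = {u} ⊔ ⨆ₐ Cone (u ++ [a])`.

Conversely, empty and singleton unions are trivial, so let `(Sₙ)` partition a cone. Its
infinite words form a compact subset of `ℕ → A` on which cones are open, hence are covered by
finitely many cone pieces, all of depth at most some `D`. Every nonempty piece then has its root
of length at most `D` (an infinite extension of a deeper root would lie in a shallower cone piece
containing that root), so only finitely many pieces are nonempty. A finite partition of
`Cone u` is either `{Cone u}`, or contains `{u}` and splits the rest into partitions of the
`Cone (u ++ [a])` with fewer pieces; induction on the number of pieces concludes. -/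

open Function

section SigmaAdditive

variable {W ι : Type*} {C : Set (Set W)} {μ : Set W → ℝ≥0∞}

theorem SigmaAdditiveOn.measure_iUnion [Countable ι] (hμ : SigmaAdditiveOn C μ) (hC : ∅ ∈ C)
    (h0 : μ ∅ = 0) {s : ι → Set W} (hs : ∀ i, s i ∈ C) (hd : Pairwise (Disjoint on s))
    (hU : ⋃ i, s i ∈ C) : μ (⋃ i, s i) = ∑' i, μ (s i) := by
  have := Encodable.ofCountable ι
  rw [← Encodable.iUnion_decode₂, ← tsum_iUnion_decode₂ μ h0]
  exact hμ _ (fun _ => Encodable.iUnion_decode₂_cases hC hs)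
    (Encodable.iUnion_decode₂_disjoint_on hd) (by rwa [Encodable.iUnion_decode₂])

theorem measure_iUnion_of_subsingleton (h0 : μ ∅ = 0) {s : ι → Set W}
    (hd : Pairwise (Disjoint on s)) (hU : (⋃ i, s i).Subsingleton) :
    μ (⋃ i, s i) = ∑' i, μ (s i) := by
  by_cases hne : ∃ i, (s i).Nonempty
  · obtain ⟨i, x, hx⟩ := hne
    have hempty : ∀ j, j ≠ i → s j = ∅ := fun j hj =>
      Set.eq_empty_of_forall_notMem fun y hy =>
        Set.disjoint_left.mp (hd hj) hy
          (hU (Set.mem_iUnion_of_mem j hy) (Set.mem_iUnion_of_mem i hx) ▸ hx)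
    have hunion : ⋃ j, s j = s i := Set.Subset.antisymm
      (Set.iUnion_subset fun j => by
        rcases eq_or_ne j i with rfl | hj
        · rfl
        · simp [hempty j hj])
      (Set.subset_iUnion s i)
    rw [hunion, tsum_eq_single i fun j hj => by rw [hempty j hj, h0]]
  · simp only [not_exists, Set.not_nonempty_iff_eq_empty] at hne
    simp [hne, h0]

end SigmaAdditive

section Words

variable {A : Type*}

theorem mem_coneInf_inl {u v : List A} : Sum.inl v ∈ ConeInf u ↔ u <+: v := Iff.rfl

theorem mem_coneInf_inr {u : List A} {x : ℕ → A} :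
    Sum.inr x ∈ ConeInf u ↔ ∀ i (h : i < u.length), x i = u[i] :=
  ⟨fun h i hi => h ⟨i, hi⟩, fun h i => h i i.2⟩

theorem inl_mem_coneInf_self (u : List A) : Sum.inl u ∈ ConeInf u := List.prefix_refl u

theorem coneInf_anti {u v : List A} (h : u <+: v) : ConeInf v ⊆ ConeInf u := by
  rintro (w | x) hw
  · exact h.trans hw
  · rw [mem_coneInf_inr] at hw ⊢
    intro i hi
    rw [hw i (hi.trans_le h.length_le), h.getElem hi]

theorem isPrefix_of_inr_mem_coneInf {u v : List A} {x : ℕ → A} (hu : Sum.inr x ∈ ConeInf u)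
    (hv : Sum.inr x ∈ ConeInf v) (hl : u.length ≤ v.length) : u <+: v := by
  rw [mem_coneInf_inr] at hu hv
  rw [List.prefix_iff_eq_take]
  refine List.ext_getElem (by simp [hl]) fun i h _ => ?_
  rw [List.getElem_take, ← hu i h, hv i (h.trans_le hl)]

theorem exists_inr_mem_coneInf [Nonempty A] (u : List A) : ∃ x, Sum.inr x ∈ ConeInf u :=
  ⟨fun i => u.getD i (Classical.arbitrary A),
    mem_coneInf_inr.mpr fun _ hi => List.getD_eq_getElem u _ hi⟩

theorem inl_notMem_coneInf_append {u v : List A} (hv : v ≠ []) :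
    Sum.inl u ∉ ConeInf (u ++ v) := fun h => by
  simpa [hv] using h.length_le

theorem disjoint_coneInf_append_singleton {u : List A} {a b : A} (hab : a ≠ b) :
    Disjoint (ConeInf (u ++ [a])) (ConeInf (u ++ [b])) := by
  refine Set.disjoint_left.mpr ?_
  suffices ∀ w, Sum.inl w ∈ ConeInf (u ++ [a]) → Sum.inl w ∉ ConeInf (u ++ [b]) by
    rintro (w | x) ha hb
    · exact this w ha hb
    · refine this (u ++ [b]) ?_ (inl_mem_coneInf_self _)
      exact isPrefix_of_inr_mem_coneInf ha hb (by simp)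
  intro w ha hb
  have hab' : u ++ [a] = u ++ [b] :=
    (List.prefix_of_prefix_length_le ha hb (by simp)).eq_of_length (by simp)
  exact hab (by simpa using hab')

theorem coneInf_eq_insert_iUnion (u : List A) :
    ConeInf u = insert (Sum.inl u) (⋃ a : A, ConeInf (u ++ [a])) := by
  refine Set.Subset.antisymm ?_ (Set.insert_subset (inl_mem_coneInf_self u)
    (Set.iUnion_subset fun a => coneInf_anti ⟨[a], rfl⟩))
  rintro (v | x) hw
  · obtain ⟨_ | ⟨a, t⟩, rfl⟩ := hw
    · simp
    · exact Or.inr (Set.mem_iUnion.mpr ⟨a, ⟨t, by simp⟩⟩)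
  · refine Or.inr (Set.mem_iUnion.mpr ⟨x u.length, mem_coneInf_inr.mpr fun i hi => ?_⟩)
    rw [mem_coneInf_inr] at hw
    rcases (Nat.lt_succ_iff.mp (by simpa using hi)).lt_or_eq with h | rfl
    · rw [hw i h, List.getElem_append_left h]
    · simp

instance [IsEmpty A] : Subsingleton (WordsInf A) := (Equiv.sumEmpty _ _).subsingleton

theorem mem_SInf_iff {s : Set (WordsInf A)} :
    s ∈ SInf A ↔ s = ∅ ∨ (∃ u, s = {Sum.inl u}) ∨ ∃ u, s = ConeInf u := by
  simp only [SInf, Set.mem_union, Set.mem_singleton_iff, Set.mem_ofPred_eq, or_assoc]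

theorem empty_mem_SInf : ∅ ∈ SInf A := mem_SInf_iff.mpr (Or.inl rfl)

theorem singleton_inl_mem_SInf (u : List A) : {Sum.inl u} ∈ SInf A :=
  mem_SInf_iff.mpr (Or.inr (Or.inl ⟨u, rfl⟩))

theorem coneInf_mem_SInf (u : List A) : ConeInf u ∈ SInf A :=
  mem_SInf_iff.mpr (Or.inr (Or.inr ⟨u, rfl⟩))

theorem exists_inl_mem_subset_coneInf_of_mem_SInf {s : Set (WordsInf A)} (hs : s ∈ SInf A)
    (hne : s.Nonempty) : ∃ r, Sum.inl r ∈ s ∧ s ⊆ ConeInf r := by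
  rcases mem_SInf_iff.mp hs with rfl | ⟨r, rfl⟩ | ⟨r, rfl⟩
  · exact absurd hne Set.not_nonempty_empty
  · exact ⟨r, rfl, Set.singleton_subset_iff.mpr (inl_mem_coneInf_self r)⟩
  · exact ⟨r, inl_mem_coneInf_self r, subset_rfl⟩

theorem exists_eq_coneInf_of_inr_mem {s : Set (WordsInf A)} (hs : s ∈ SInf A) {x : ℕ → A}
    (hx : Sum.inr x ∈ s) : ∃ v, s = ConeInf v := by
  rcases mem_SInf_iff.mp hs with rfl | ⟨r, rfl⟩ | h
  · exact absurd hx (Set.notMem_empty _)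
  · exact absurd hx (by simp)
  · exact h

theorem eq_singleton_or_eq_coneInf_of_inl_mem {s : Set (WordsInf A)} (hs : s ∈ SInf A)
    {u : List A} (hu : Sum.inl u ∈ s) (hsu : s ⊆ ConeInf u) :
    s = {Sum.inl u} ∨ s = ConeInf u := by
  obtain ⟨r, hr, hsr⟩ := exists_inl_mem_subset_coneInf_of_mem_SInf hs ⟨_, hu⟩
  obtain rfl : r = u := antisymm (hsr hu) (mem_coneInf_inl.mp (hsu hr))
  rcases mem_SInf_iff.mp hs with rfl | ⟨w, rfl⟩ | ⟨v, rfl⟩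
  · exact absurd hu (Set.notMem_empty _)
  · exact Or.inl (by rw [Set.mem_singleton_iff.mp hu])
  · exact Or.inr (by rw [antisymm (mem_coneInf_inl.mp hu) (hsr (inl_mem_coneInf_self v))])

theorem exists_subset_coneInf_append_singleton {s : Set (WordsInf A)} (hs : s ∈ SInf A)
    (hne : s.Nonempty) {u : List A} (hsu : s ⊆ ConeInf u) (hu : Sum.inl u ∉ s) :
    ∃ a, s ⊆ ConeInf (u ++ [a]) := by
  obtain ⟨r, hr, hsr⟩ := exists_inl_mem_subset_coneInf_of_mem_SInf hs hne
  obtain ⟨_ | ⟨a, t⟩, rfl⟩ := hsu hr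
  · exact absurd (by simpa using hr) hu
  · exact ⟨a, hsr.trans (coneInf_anti ⟨t, by simp⟩)⟩

end Words

section FiniteAdditivity

open scoped Classical

variable {A ι : Type*} {s : Finset ι} {S : ι → Set (WordsInf A)} {u : List A}

theorem biUnion_filter_subset_eq_coneInf_append (hS : ∀ i ∈ s, S i ∈ SInf A)
    (hne : ∀ i ∈ s, (S i).Nonempty) (hU : ⋃ i ∈ s, S i = ConeInf u)
    (hu : ∀ i ∈ s, Sum.inl u ∈ S i → S i = {Sum.inl u}) (a : A) :
    ⋃ i ∈ s.filter (S · ⊆ ConeInf (u ++ [a])), S i = ConeInf (u ++ [a]) := by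
  refine Set.Subset.antisymm (Set.iUnion₂_subset fun i hi => (Finset.mem_filter.mp hi).2)
    fun x hx => ?_
  obtain ⟨i, hi, hxi⟩ := Set.mem_iUnion₂.mp (hU ▸ coneInf_anti ⟨[a], rfl⟩ hx)
  have hui : Sum.inl u ∉ S i := fun h => by
    rw [hu i hi h, Set.mem_singleton_iff] at hxi
    exact inl_notMem_coneInf_append (List.cons_ne_nil a []) (hxi ▸ hx)
  obtain ⟨b, hb⟩ := exists_subset_coneInf_append_singleton (hS i hi) (hne i hi)
    (hU ▸ Set.subset_biUnion_of_mem hi) hui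
  obtain rfl : b = a := by
    by_contra hba
    exact Set.disjoint_left.mp (disjoint_coneInf_append_singleton hba) (hb hxi) hx
  exact Set.mem_biUnion (Finset.mem_filter.mpr ⟨hi, hb⟩) hxi

theorem pairwise_disjoint_filter_subset_coneInf_append (hne : ∀ i ∈ s, (S i).Nonempty) :
    Pairwise (Disjoint on fun a : A => s.filter (S · ⊆ ConeInf (u ++ [a]))) := by
  intro a b hab
  refine Finset.disjoint_left.mpr fun i hia hib => ?_
  obtain ⟨x, hx⟩ := hne i (Finset.mem_filter.mp hia).1
  exact Set.disjoint_left.mp (disjoint_coneInf_append_singleton hab)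
    ((Finset.mem_filter.mp hia).2 hx) ((Finset.mem_filter.mp hib).2 hx)

theorem erase_eq_biUnion_filter_subset_coneInf_append [Fintype A] (hS : ∀ i ∈ s, S i ∈ SInf A)
    (hne : ∀ i ∈ s, (S i).Nonempty) (hsub : ∀ i ∈ s, S i ⊆ ConeInf u) {i₀ : ι}
    (hu : ∀ i ∈ s, Sum.inl u ∈ S i ↔ i = i₀) :
    s.erase i₀ = Finset.univ.biUnion fun a => s.filter (S · ⊆ ConeInf (u ++ [a])) := by
  ext i
  simp only [Finset.mem_erase, Finset.mem_biUnion, Finset.mem_univ, true_and, Finset.mem_filter]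
  refine ⟨fun ⟨hii₀, hi⟩ => ?_, fun ⟨a, hi, hia⟩ => ⟨fun hii₀ => ?_, hi⟩⟩
  · obtain ⟨a, ha⟩ := exists_subset_coneInf_append_singleton (hS i hi) (hne i hi) (hsub i hi)
      fun hui => hii₀ ((hu i hi).mp hui)
    exact ⟨a, hi, ha⟩
  · exact inl_notMem_coneInf_append (List.cons_ne_nil a []) (hia ((hu i hi).mpr hii₀))

theorem measure_coneInf_eq_sum [Fintype A] {μ : Set (WordsInf A) → ℝ≥0∞}
    (hrec : ∀ u : List A, μ (ConeInf u) = μ {Sum.inl u} + ∑ a : A, μ (ConeInf (u ++ [a])))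
    (hS : ∀ i ∈ s, S i ∈ SInf A) (hne : ∀ i ∈ s, (S i).Nonempty)
    (hd : (s : Set ι).PairwiseDisjoint S) (hU : ⋃ i ∈ s, S i = ConeInf u) :
    μ (ConeInf u) = ∑ i ∈ s, μ (S i) := by
  induction s using Finset.strongInduction generalizing u with | H s ih =>
    have hsub : ∀ i ∈ s, S i ⊆ ConeInf u := fun i hi => hU ▸ Set.subset_biUnion_of_mem hi
    obtain ⟨i₀, hi₀, hu⟩ := Set.mem_iUnion₂.mp (hU ▸ inl_mem_coneInf_self u)
    have hunique : ∀ i ∈ s, Sum.inl u ∈ S i ↔ i = i₀ := fun i hi =>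
      ⟨fun h => hd.elim hi hi₀ (Set.not_disjoint_iff.mpr ⟨_, h, hu⟩), fun h => h ▸ hu⟩
    rcases eq_singleton_or_eq_coneInf_of_inl_mem (hS i₀ hi₀) hu (hsub i₀ hi₀) with h | h
    · set t : A → Finset ι := fun a => s.filter (S · ⊆ ConeInf (u ++ [a]))
      have ht : ∀ a, t a ⊂ s := fun a => Finset.filter_ssubset.mpr ⟨i₀, hi₀,
        fun hi₀a => inl_notMem_coneInf_append (List.cons_ne_nil _ _) (hi₀a hu)⟩
      have hcover : ∀ a, ⋃ i ∈ t a, S i = ConeInf (u ++ [a]) :=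
        biUnion_filter_subset_eq_coneInf_append hS hne hU fun i hi hui =>
          (hunique i hi).mp hui ▸ h
      calc μ (ConeInf u) = μ (S i₀) + ∑ a, μ (ConeInf (u ++ [a])) := by rw [hrec u, h]
        _ = μ (S i₀) + ∑ a, ∑ i ∈ t a, μ (S i) := by
          congr 1
          exact Finset.sum_congr rfl fun a _ => ih (t a) (ht a)
            (fun i hi => hS i ((ht a).1 hi)) (fun i hi => hne i ((ht a).1 hi))
            (hd.subset (ht a).1) (hcover a)
        _ = ∑ i ∈ s, μ (S i) := by
          rw [← Finset.sum_biUnion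
            ((pairwise_disjoint_filter_subset_coneInf_append hne).set_pairwise _),
            ← erase_eq_biUnion_filter_subset_coneInf_append hS hne hsub hunique,
            Finset.add_sum_erase s (fun i => μ (S i)) hi₀]
    · obtain rfl : s = {i₀} := Finset.eq_singleton_iff_unique_mem.mpr ⟨hi₀, fun i hi => by
        by_contra hii₀
        obtain ⟨x, hx⟩ := hne i hi
        exact Set.disjoint_left.mp (hd hi hi₀ hii₀) hx (h ▸ hsub i hi hx)⟩
      rw [Finset.sum_singleton, h]

end FiniteAdditivity

section Compactness

variable {A ι : Type*}

theorem preimage_inr_coneInf (u : List A) :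
    (Sum.inr ⁻¹' ConeInf u : Set (ℕ → A)) =
      ⋂ i : Fin u.length, (· i) ⁻¹' {u.get i} := by
  ext x
  simp only [Set.mem_preimage, Set.mem_iInter, Set.mem_singleton_iff]
  rfl

theorem isOpen_preimage_inr_coneInf [TopologicalSpace A] [DiscreteTopology A] (u : List A) :
    IsOpen (Sum.inr ⁻¹' ConeInf u : Set (ℕ → A)) := by
  rw [preimage_inr_coneInf]
  exact isOpen_iInter_of_finite fun i => (isOpen_discrete _).preimage (continuous_apply _)

theorem isClosed_preimage_inr_coneInf [TopologicalSpace A] [DiscreteTopology A] (u : List A) :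
    IsClosed (Sum.inr ⁻¹' ConeInf u : Set (ℕ → A)) := by
  rw [preimage_inr_coneInf]
  exact isClosed_iInter fun i => (isClosed_discrete _).preimage (continuous_apply _)

theorem exists_depth_bound_of_coneInf_subset_iUnion [Finite A] {S : ι → Set (WordsInf A)}
    (hS : ∀ i, S i ∈ SInf A) {u : List A} (hU : ConeInf u ⊆ ⋃ i, S i) :
    ∃ D : ℕ, ∀ x, Sum.inr x ∈ ConeInf u →
      ∃ i v, S i = ConeInf v ∧ v.length ≤ D ∧ Sum.inr x ∈ ConeInf v := by
  let : TopologicalSpace A := ⊥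
  have : DiscreteTopology A := ⟨rfl⟩
  let U : ℕ → Set (ℕ → A) := fun D =>
    ⋃ (i) (v : List A) (_ : S i = ConeInf v ∧ v.length ≤ D), Sum.inr ⁻¹' ConeInf v
  have hopen : ∀ D, IsOpen (U D) := fun D => isOpen_iUnion fun i => isOpen_iUnion fun v =>
    isOpen_iUnion fun _ => isOpen_preimage_inr_coneInf v
  have hmono : Monotone U := fun D E hDE => Set.iUnion_mono fun i => Set.iUnion_mono fun v =>
    Set.iUnion_subset_iUnion_const fun h => ⟨h.1, h.2.trans hDE⟩
  have hcover : Sum.inr ⁻¹' ConeInf u ⊆ ⋃ D, U D := fun x hx => by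
    obtain ⟨i, hi⟩ := Set.mem_iUnion.mp (hU (Set.mem_preimage.mp hx))
    obtain ⟨v, hv⟩ := exists_eq_coneInf_of_inr_mem (hS i) hi
    simp only [U, Set.mem_iUnion]
    exact ⟨v.length, i, v, ⟨hv, le_rfl⟩, hv ▸ hi⟩
  obtain ⟨D, hD⟩ := (isClosed_preimage_inr_coneInf u).isCompact.elim_directed_cover U hopen
    hcover hmono.directed_le
  exact ⟨D, fun x hx => by simpa [U, and_assoc] using hD hx⟩

theorem finite_setOf_nonempty_of_iUnion_eq_coneInf [Finite A] [Nonempty A]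
    {S : ι → Set (WordsInf A)} (hS : ∀ i, S i ∈ SInf A) (hd : Pairwise (Disjoint on S))
    {u : List A} (hU : ⋃ i, S i = ConeInf u) : {i | (S i).Nonempty}.Finite := by
  obtain ⟨D, hD⟩ := exists_depth_bound_of_coneInf_subset_iUnion hS hU.ge
  have hunique := subsingleton_setOfPred_mem_iff_pairwise_disjoint.mpr hd
  have hroot : ∀ i, (S i).Nonempty → ∃ r : List A, r.length ≤ D ∧ Sum.inl r ∈ S i := by
    intro i hi
    obtain ⟨r, hr, hsr⟩ := exists_inl_mem_subset_coneInf_of_mem_SInf (hS i) hi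
    obtain ⟨x, hx⟩ := exists_inr_mem_coneInf r
    have hur : u <+: r := mem_coneInf_inl.mp (hU ▸ Set.mem_iUnion_of_mem i hr)
    obtain ⟨j, v, hj, hvD, hxv⟩ := hD x (coneInf_anti hur hx)
    refine ⟨r, ?_, hr⟩
    rcases le_total r.length v.length with hrv | hvr
    · exact hrv.trans hvD
    · have hrj : Sum.inl r ∈ S j := hj ▸ isPrefix_of_inr_mem_coneInf hxv hx hvr
      obtain rfl : j = i := hunique _ hrj hr
      exact (mem_coneInf_inl.mp (hsr (hj ▸ inl_mem_coneInf_self v))).length_le.trans hvD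
  refine ((List.finite_length_le A D).biUnion fun r _ => (hunique (Sum.inl r)).finite).subset
    fun i hi => ?_
  obtain ⟨r, hrD, hri⟩ := hroot i hi
  exact Set.mem_biUnion hrD hri

end Compactness

section Main

variable {A : Type*} [Fintype A] {μ : Set (WordsInf A) → ℝ≥0∞}

theorem measure_coneInf_eq_of_sigmaAdditiveOn (h0 : μ ∅ = 0) (hμ : SigmaAdditiveOn (SInf A) μ)
    (u : List A) : μ (ConeInf u) = μ {Sum.inl u} + ∑ a : A, μ (ConeInf (u ++ [a])) := by
  let s : Option A → Set (WordsInf A) := fun o => o.elim {Sum.inl u} fun a => ConeInf (u ++ [a])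
  have hs : ∀ o, s o ∈ SInf A := by
    rintro (_ | a)
    · exact singleton_inl_mem_SInf u
    · exact coneInf_mem_SInf _
  have hd : Pairwise (Disjoint on s) := by
    rintro (_ | a) (_ | b) hab
    · exact absurd rfl hab
    · exact Set.disjoint_singleton_left.mpr (inl_notMem_coneInf_append (List.cons_ne_nil _ _))
    · exact Set.disjoint_singleton_right.mpr (inl_notMem_coneInf_append (List.cons_ne_nil _ _))
    · exact disjoint_coneInf_append_singleton fun h => hab (congrArg some h)
  have hU : ⋃ o, s o = ConeInf u := by
    rw [Set.iUnion_option, coneInf_eq_insert_iUnion, Set.insert_eq]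
    rfl
  have := hμ.measure_iUnion empty_mem_SInf h0 hs hd (hU ▸ coneInf_mem_SInf u)
  rwa [hU, tsum_fintype, Fintype.sum_option] at this

theorem sigmaAdditiveOn_SInf_of_measure_coneInf_eq (h0 : μ ∅ = 0)
    (hrec : ∀ u : List A, μ (ConeInf u) = μ {Sum.inl u} + ∑ a : A, μ (ConeInf (u ++ [a]))) :
    SigmaAdditiveOn (SInf A) μ := by
  intro S hS hd hU
  by_cases hsub : (⋃ n, S n).Subsingleton
  · exact measure_iUnion_of_subsingleton h0 hd hsub
  obtain ⟨u, hu⟩ : ∃ u, ⋃ n, S n = ConeInf u := by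
    rcases mem_SInf_iff.mp hU with h | ⟨w, h⟩ | h
    · exact absurd (h ▸ Set.subsingleton_empty) hsub
    · exact absurd (h ▸ Set.subsingleton_singleton) hsub
    · exact h
  have : Nonempty A := not_isEmpty_iff.mp fun _ => hsub Set.subsingleton_of_subsingleton
  have hfin := finite_setOf_nonempty_of_iUnion_eq_coneInf hS hd hu
  have hUfin : ⋃ n ∈ hfin.toFinset, S n = ConeInf u := hu ▸ Set.Subset.antisymm
    (Set.iUnion₂_subset fun n _ => Set.subset_iUnion S n)
    (Set.iUnion_subset fun n x hx =>
      Set.mem_iUnion₂.mpr ⟨n, hfin.mem_toFinset.mpr ⟨x, hx⟩, hx⟩)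
  have hzero : ∀ n ∉ hfin.toFinset, μ (S n) = 0 := fun n hn => by
    rw [Set.not_nonempty_iff_eq_empty.mp (hfin.mem_toFinset.not.mp hn), h0]
  rw [hu, tsum_eq_sum hzero]
  exact measure_coneInf_eq_sum hrec (fun n _ => hS n) (fun n hn => hfin.mem_toFinset.mp hn)
    (hd.set_pairwise _) hUfin

end Main

/-- `μ` with `μ ∅ = 0` is σ-additive on `S_∞` iff
`μ(Cone_∞ u) = μ {u} + Σ_{a ∈ A} μ(Cone_∞ (u ++ [a]))` for all finite words `u`. -/
theorem sInf_sigma_additive_iff (A : Type*) [Fintype A]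
    (μ : Set (WordsInf A) → ℝ≥0∞) (h0 : μ ∅ = 0) :
    SigmaAdditiveOn (SInf A) μ ↔
      ∀ u : List A,
        μ (ConeInf u) = μ {Sum.inl u} + ∑ a : A, μ (ConeInf (u ++ [a])) :=
  ⟨measure_coneInf_eq_of_sigmaAdditiveOn h0, sigmaAdditiveOn_SInf_of_measure_coneInf_eq h0⟩
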